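/- arXiv:2204.10954 — 2 statements merged into one kernel-verified Lean document; each statement's English description precedes it below -/
import Mathlib

section
/- Let a be a measurable function on ℝ³ with ‖a‖_{3,ρ} < ∞ for some ρ>0. Then for every t>0, ‖(H*a)(t)‖_{3,ρ} ≤ ‖a‖_{3,ρ}. -/
open MeasureTheory ENNReal Metric Set Filter
open scoped Topology NNReal

noncomputable section

/-- Euclidean 3-space. -/
abbrev E3 : Type := EuclideanSpace ℝ (Fin 3)

/-- Standard basis vector. -/
def eb (i : Fin 3) : E3 := EuclideanSpace.single i 1

/-- Divergence of a vector field. -/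
def vdiv (v : E3 → E3) (x : E3) : ℝ := ∑ i, fderiv ℝ v x (eb i) i

/-- Laplacian of a vector field. -/
def vlap (v : E3 → E3) (x : E3) : E3 :=
  ∑ i, fderiv ℝ (fun y => fderiv ℝ v y (eb i)) x (eb i)

/-- Laplacian of a scalar field. -/
def slap (g : E3 → ℝ) (x : E3) : ℝ :=
  ∑ i, fderiv ℝ (fun y => fderiv ℝ g y (eb i)) x (eb i)

/-- Localized L^p norm: `‖u‖_{p,ρ} = sup_x (∫_{B(x,ρ)} |u|^p)^{1/p}`. -/
def locLp {α : Type*} [NormedAddCommGroup α] (p ρ : ℝ) (u : E3 → α) : ℝ≥0∞ :=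
  ⨆ x : E3, (∫⁻ y in Metric.ball x ρ, (‖u y‖₊ : ℝ≥0∞) ^ p) ^ (1 / p)

/-- Smooth, compactly supported, divergence-free vector field. -/
def IsTestDivFree (v : E3 → E3) : Prop :=
  ContDiff ℝ (⊤ : ℕ∞) v ∧ HasCompactSupport v ∧ ∀ x, vdiv v x = 0

/-- Membership in `J³(ℝ³)`: the closure in `L³` of smooth compactly supported
divergence-free fields. -/
def InJ3 (u : E3 → E3) : Prop :=
  MemLp u 3 volume ∧
    ∀ ε : ℝ, 0 < ε → ∃ v : E3 → E3, IsTestDivFree v ∧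
      eLpNorm (u - v) 3 volume < ENNReal.ofReal ε

/-- `(U, π)` is a classical solution to the Navier–Stokes equations
`U_t + (U·∇)U + ∇π = ΔU`, `∇·U = 0`, at each time of the set `I`. -/
def IsNSSolOn (I : Set ℝ) (U : ℝ → E3 → E3) (π : ℝ → E3 → ℝ) : Prop :=
  ∀ t ∈ I, ContDiff ℝ 2 (U t) ∧ ContDiff ℝ 1 (π t) ∧
    (∀ x, vdiv (U t) x = 0) ∧
    ∀ x, HasDerivAt (fun s => U s x)
      (vlap (U t) x - fderiv ℝ (U t) x (U t x) - gradient (π t) x) t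

/-- Membership in the Hölder class `C^{k,θ}(ℝ³)`. -/
def InHolderClass {α : Type*} [NormedAddCommGroup α] [NormedSpace ℝ α]
    (k : ℕ) (θ : ℝ) (f : E3 → α) : Prop :=
  ContDiff ℝ (k : ℕ∞) f ∧ ∃ C : ℝ≥0, HolderWith C θ.toNNReal (iteratedFDeriv ℝ k f)

/-- Hölder seminorm `[f]_θ` (valued in `ℝ≥0∞`). -/
def holderSemi {α β : Type*} [PseudoEMetricSpace α] [NormedAddCommGroup β]
    (θ : ℝ) (f : α → β) : ℝ≥0∞ :=
  ⨆ x, ⨆ y, (‖f x - f y‖₊ : ℝ≥0∞) / edist x y ^ θ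

/-- The heat kernel on `ℝ³`. -/
def heatK (t : ℝ) (z : E3) : ℝ :=
  (4 * Real.pi * t) ^ (-(3:ℝ)/2) * Real.exp (-‖z‖^2 / (4*t))

/-- Convolution of the heat kernel with a vector field: `(H*a)(t,x)`. -/
def heatConv (a : E3 → E3) (t : ℝ) (x : E3) : E3 :=
  ∫ y, heatK t (x - y) • a y

/-! ### Auxiliary lemmas -/

lemma heatK_nonneg {t : ℝ} (ht : 0 < t) (z : E3) : 0 ≤ heatK t z := by
  unfold heatK; positivity

lemma lint_neg_eq_self (f : E3 → ℝ≥0∞) (hf : Measurable f) :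
    ∫⁻ y, f (-y) = ∫⁻ y, f y := by
  have h : ∫⁻ y, f y ∂(Measure.map Neg.neg (volume : Measure E3)) = ∫⁻ y, f (-y) :=
    lintegral_map hf measurable_neg
  rw [Measure.map_neg_eq_self] at h
  exact h.symm

lemma lint_sub_left_eq_self (f : E3 → ℝ≥0∞) (hf : Measurable f) (x : E3) :
    ∫⁻ z, f (x - z) = ∫⁻ y, f y := by
  have h2 : ∫⁻ z, (fun w => f (x + w)) (-z) = ∫⁻ w, f (x + w) :=
    lint_neg_eq_self (fun w => f (x + w)) (hf.comp (measurable_const.add measurable_id))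
  simp only [sub_eq_add_neg]
  rw [h2, lintegral_add_left_eq_self (fun w => f w) x]

lemma exp_norm_sq_integrable {b : ℝ} (hb : 0 < b) :
    Integrable (fun v : E3 => Real.exp (-b * ‖v‖^2)) := by
  have h := GaussianFourier.integrable_cexp_neg_mul_sq_norm_add (V := E3) (b := (b:ℂ))
    (by simpa using hb) 0 0
  have h2 := h.norm
  refine h2.congr (Filter.Eventually.of_forall fun v => ?_)
  simp only [Complex.norm_exp]
  norm_num [← Complex.ofReal_pow]

lemma heatK_arg (t : ℝ) (z : E3) : -‖z‖^2 / (4*t) = -(4*t)⁻¹ * ‖z‖^2 := by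
  ring

lemma heatK_integrable {t : ℝ} (ht : 0 < t) : Integrable (heatK t) := by
  have hb : (0:ℝ) < (4*t)⁻¹ := by positivity
  have h := (exp_norm_sq_integrable hb).const_mul ((4 * Real.pi * t) ^ (-(3:ℝ)/2))
  refine h.congr (Filter.Eventually.of_forall fun z => ?_)
  unfold heatK
  rw [heatK_arg]

lemma heatK_integral {t : ℝ} (ht : 0 < t) : ∫ z : E3, heatK t z = 1 := by
  have hb : (0:ℝ) < (4*t)⁻¹ := by positivity
  have h := GaussianFourier.integral_rexp_neg_mul_sq_norm (V := E3) hb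
  have hfr : (Module.finrank ℝ E3 : ℝ) / 2 = 3/2 := by
    simp [finrank_euclideanSpace]
  rw [hfr] at h
  have hbase : Real.pi / (4*t)⁻¹ = 4 * Real.pi * t := by
    field_simp
  rw [hbase] at h
  unfold heatK
  simp_rw [heatK_arg]
  rw [integral_const_mul, h, ← Real.rpow_add (by positivity : (0:ℝ) < 4 * Real.pi * t)]
  norm_num

lemma lintegral_heatK {t : ℝ} (ht : 0 < t) :
    ∫⁻ z : E3, ENNReal.ofReal (heatK t z) = 1 := by
  rw [← ofReal_integral_eq_lintegral_ofReal (heatK_integrable ht)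
    (Filter.Eventually.of_forall fun z => heatK_nonneg ht z), heatK_integral ht,
    ENNReal.ofReal_one]

/-- The heat semigroup does not increase the localized `L³` norm:
`‖(H*a)(t)‖_{3,ρ} ≤ ‖a‖_{3,ρ}`. -/
theorem heat_locL3_contraction (a : E3 → E3) (ha : Measurable a)
    (ρ : ℝ) (hρ : 0 < ρ) (hfin : locLp 3 ρ a < ⊤) :
    ∀ t : ℝ, 0 < t → locLp 3 ρ (heatConv a t) ≤ locLp 3 ρ a := by
  intro t ht
  have hKc : Continuous (heatK t) := by
    unfold heatK; fun_prop
  set K : E3 → ℝ≥0∞ := fun z => ENNReal.ofReal (heatK t z) with hKdef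
  have hKm : Measurable K := hKc.measurable.ennreal_ofReal
  have hK1 : ∫⁻ z, K z = 1 := lintegral_heatK ht
  set G : E3 → ℝ≥0∞ := fun y => (‖a y‖₊ : ℝ≥0∞) with hGdef
  have hGm : Measurable G := ha.nnnorm.coe_nnreal_ennreal
  have hKxm : ∀ x : E3, Measurable fun y => K (x - y) :=
    fun x => hKm.comp (measurable_const.sub measurable_id)
  have hKx1 : ∀ x : E3, ∫⁻ y, K (x - y) = 1 := fun x => by
    rw [lint_sub_left_eq_self K hKm x]; exact hK1
  set M := locLp 3 ρ a with hMdef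
  -- Step 1 : pointwise bound by the lintegral
  have step1 : ∀ x, (‖heatConv a t x‖₊ : ℝ≥0∞) ≤ ∫⁻ y, K (x - y) * G y := by
    intro x
    refine le_trans (enorm_integral_le_lintegral_enorm _) (le_of_eq ?_)
    refine lintegral_congr fun y => ?_
    rw [enorm_smul, Real.enorm_eq_ofReal (heatK_nonneg ht (x - y))]; rfl
  -- Step 2 : Hölder (Jensen) against the probability density K
  have step2 : ∀ x, ∫⁻ y, K (x - y) * G y
      ≤ (∫⁻ y, K (x - y) * G y ^ (3:ℝ)) ^ (1/(3:ℝ)) := by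
    intro x
    have hpq : ((3:ℝ)/2).HolderConjugate 3 := ⟨by norm_num, by norm_num, by norm_num⟩
    have hf : AEMeasurable (fun y => K (x - y) ^ ((2:ℝ)/3)) volume :=
      ((hKxm x).pow_const _).aemeasurable
    have hg : AEMeasurable (fun y => K (x - y) ^ ((1:ℝ)/3) * G y) volume :=
      (((hKxm x).pow_const _).mul hGm).aemeasurable
    have h := ENNReal.lintegral_mul_le_Lp_mul_Lq volume hpq hf hg
    simp only [Pi.mul_apply] at h
    calc ∫⁻ y, K (x - y) * G y
        = ∫⁻ y, K (x - y) ^ ((2:ℝ)/3) * (K (x - y) ^ ((1:ℝ)/3) * G y) := by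
          refine lintegral_congr fun y => ?_
          rw [← mul_assoc, ← ENNReal.rpow_add_of_nonneg _ _ (by norm_num) (by norm_num)]
          norm_num
      _ ≤ (∫⁻ y, (K (x - y) ^ ((2:ℝ)/3)) ^ ((3:ℝ)/2)) ^ (1/((3:ℝ)/2))
            * (∫⁻ y, (K (x - y) ^ ((1:ℝ)/3) * G y) ^ (3:ℝ)) ^ (1/(3:ℝ)) := h
      _ = (∫⁻ y, K (x - y)) ^ (1/((3:ℝ)/2))
            * (∫⁻ y, K (x - y) * G y ^ (3:ℝ)) ^ (1/(3:ℝ)) := by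
          congr 2
          · refine lintegral_congr fun y => ?_
            rw [← ENNReal.rpow_mul]
            norm_num
          · refine lintegral_congr fun y => ?_
            rw [ENNReal.mul_rpow_of_nonneg _ _ (by norm_num), ← ENNReal.rpow_mul]
            norm_num
      _ = (∫⁻ y, K (x - y) * G y ^ (3:ℝ)) ^ (1/(3:ℝ)) := by
          rw [hKx1 x, ENNReal.one_rpow, one_mul]
  -- Step 3 : cube the pointwise bound
  have step3 : ∀ x, (‖heatConv a t x‖₊ : ℝ≥0∞) ^ (3:ℝ)
      ≤ ∫⁻ y, K (x - y) * G y ^ (3:ℝ) := by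
    intro x
    have h := (step1 x).trans (step2 x)
    have h3 := ENNReal.rpow_le_rpow h (by norm_num : (0:ℝ) ≤ 3)
    rwa [← ENNReal.rpow_mul, show (1/(3:ℝ))*3 = 1 by norm_num, ENNReal.rpow_one] at h3
  -- Step 4 : change of variables
  have step4 : ∀ x, ∫⁻ y, K (x - y) * G y ^ (3:ℝ) = ∫⁻ z, K z * G (x - z) ^ (3:ℝ) := by
    intro x
    have hm : Measurable fun y => K (x - y) * G y ^ (3:ℝ) := (hKxm x).mul (hGm.pow_const _)
    have h := lint_sub_left_eq_self (fun y => K (x - y) * G y ^ (3:ℝ)) hm x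
    rw [← h]
    refine lintegral_congr fun z => ?_
    have hzz : x - (x - z) = z := by abel
    rw [hzz]
  -- Step 5 : translating the ball
  have step5 : ∀ (c z : E3), ∫⁻ x in Metric.ball c ρ, G (x - z) ^ (3:ℝ)
      = ∫⁻ w in Metric.ball (c - z) ρ, G w ^ (3:ℝ) := by
    intro c z
    rw [← lintegral_indicator measurableSet_ball, ← lintegral_indicator measurableSet_ball]
    have he : ∀ x : E3, (Metric.ball c ρ).indicator (fun x => G (x - z) ^ (3:ℝ)) x
        = (Metric.ball (c - z) ρ).indicator (fun w => G w ^ (3:ℝ)) (x - z) := by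
      intro x
      by_cases hx : x ∈ Metric.ball c ρ
      · rw [Set.indicator_of_mem hx,
          Set.indicator_of_mem (by simpa [Metric.mem_ball, dist_sub_right] using hx)]
      · rw [Set.indicator_of_notMem hx,
          Set.indicator_of_notMem (by simpa [Metric.mem_ball, dist_sub_right] using hx)]
    simp only [he]
    exact lintegral_sub_right_eq_self
      ((Metric.ball (c - z) ρ).indicator fun w => G w ^ (3:ℝ)) z
  -- Step 6 : the localized bound for a
  have hball : ∀ c : E3, ∫⁻ y in Metric.ball c ρ, G y ^ (3:ℝ) ≤ M ^ (3:ℝ) := by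
    intro c
    have h1 : (∫⁻ y in Metric.ball c ρ, G y ^ (3:ℝ)) ^ (1/(3:ℝ)) ≤ M := by
      rw [hMdef]
      unfold locLp
      exact le_iSup (fun x : E3 =>
        (∫⁻ y in Metric.ball x ρ, (‖a y‖₊ : ℝ≥0∞) ^ (3:ℝ)) ^ (1/(3:ℝ))) c
    have h2 := ENNReal.rpow_le_rpow h1 (by norm_num : (0:ℝ) ≤ 3)
    rwa [← ENNReal.rpow_mul, show (1/(3:ℝ))*3 = 1 by norm_num, ENNReal.rpow_one] at h2
  -- Main estimate over any ball
  have main : ∀ c : E3, ∫⁻ x in Metric.ball c ρ, (‖heatConv a t x‖₊ : ℝ≥0∞) ^ (3:ℝ)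
      ≤ M ^ (3:ℝ) := by
    intro c
    calc ∫⁻ x in Metric.ball c ρ, (‖heatConv a t x‖₊ : ℝ≥0∞) ^ (3:ℝ)
        ≤ ∫⁻ x in Metric.ball c ρ, ∫⁻ z, K z * G (x - z) ^ (3:ℝ) := by
          refine lintegral_mono fun x => ?_
          rw [← step4 x]; exact step3 x
      _ = ∫⁻ z, ∫⁻ x in Metric.ball c ρ, K z * G (x - z) ^ (3:ℝ) := by
          apply lintegral_lintegral_swap
          exact ((hKm.comp measurable_snd).mul
            ((hGm.comp (measurable_fst.sub measurable_snd)).pow_const _)).aemeasurable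
      _ = ∫⁻ z, K z * ∫⁻ x in Metric.ball c ρ, G (x - z) ^ (3:ℝ) := by
          refine lintegral_congr fun z => ?_
          exact lintegral_const_mul (K z)
            ((hGm.comp (measurable_id.sub measurable_const)).pow_const _)
      _ ≤ ∫⁻ z, K z * M ^ (3:ℝ) := by
          refine lintegral_mono fun z => ?_
          exact mul_le_mul_right (by rw [step5 c z]; exact hball (c - z)) _
      _ = M ^ (3:ℝ) := by
          rw [lintegral_mul_const _ hKm, hK1, one_mul]
  -- conclude
  unfold locLp
  refine iSup_le fun c => ?_
  have h := ENNReal.rpow_le_rpow (main c) (by norm_num : (0:ℝ) ≤ 1/3)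
  rw [← ENNReal.rpow_mul, show (3:ℝ)*(1/3) = 1 by norm_num, ENNReal.rpow_one] at h
  exact h
end
end

section
/- Let K : (0,∞)×ℝ³ → ℝ be measurable with |K(s,z)| ≤ (|z| + s^{1/2})^{−4} for all s>0, z∈ℝ³ (the pointwise bound satisfied by the gradient of the Oseen tensor). Let T>0 and let a, b be measurable on (0,T)×ℝ³ with sup_{0<t<T} t^{1/2}(‖a(t)‖_∞ + ‖b(t)‖_∞) < ∞ and sup_{0<t<T}(‖a(t)‖_3 + ‖b(t)‖_3) < ∞, and set V(t,x) := ∫_0^t ∫_{ℝ³} K(t−τ, x−y) a(τ,y) b(τ,y) dy dτ. Then there exists a constant c, independent of a and b, such that for all ρ>0 and all t ∈ (0,T): t^{1/2}‖V(t)‖_∞ ≤ c [ sup_{0<τ<t} τ‖a(τ)b(τ)‖_∞ + sup_{0<τ<t} ‖|a(τ)|^{1/2}|b(τ)|^{1/2}‖_{3,ρ}² + t ρ^{−2} sup_{0<τ<t} ‖|a(τ)|^{1/2}|b(τ)|^{1/2}‖_3² ]. -/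
open MeasureTheory ENNReal Metric Set Filter
open scoped Topology NNReal

noncomputable section

/-- Space-time convolution against a kernel applied to the product `a·b`. -/
def kerConv (K : ℝ → E3 → ℝ) (a b : ℝ → E3 → ℝ) (t : ℝ) (x : E3) : ℝ :=
  ∫ τ in Set.Ioo 0 t, ∫ y, K (t - τ) (x - y) * (a τ y * b τ y)

def Cp (p : ℝ) : ℝ := ∫ w : E3, (1 + ‖w‖) ^ (-p)

lemma Cp_nonneg (p : ℝ) : 0 ≤ Cp p :=
  integral_nonneg fun w => Real.rpow_nonneg (by positivity) _

lemma lint_shift (x : E3) (f : E3 → ℝ≥0∞) : ∫⁻ y, f (x - y) = ∫⁻ y, f y := by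
  have h1 : ∫⁻ y, f (x - y) = ∫⁻ y, f (x + y) := by
    have := lintegral_map_equiv (μ := (volume : Measure E3)) (fun z => f (x + z)) (MeasurableEquiv.neg E3)
    have hmap : Measure.map (⇑(MeasurableEquiv.neg E3)) (volume : Measure E3) = volume := by
      have : ⇑(MeasurableEquiv.neg E3) = (Neg.neg : E3 → E3) := rfl
      rw [this, Measure.map_neg_eq_self]
    rw [hmap] at this
    simp only [MeasurableEquiv.neg_apply] at this
    simp_rw [← sub_eq_add_neg] at this
    exact this.symm
  rw [h1, lintegral_add_left_eq_self (fun z => f z) x]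

lemma finrankE3 : Module.finrank ℝ E3 = 3 := by simp

lemma kerInt (p σ : ℝ) (hp : 3 < p) (hσ : 0 < σ) :
    ∫⁻ z : E3, ENNReal.ofReal ((‖z‖ + σ) ^ (-p)) =
      ENNReal.ofReal (σ ^ (3 - p) * Cp p) := by
  rw [Cp]
  have hdim : (Module.finrank ℝ E3 : ℝ) < p := by rw [finrankE3]; exact_mod_cast hp
  have hg : Integrable (fun w : E3 => (1 + ‖w‖) ^ (-p)) := integrable_one_add_norm hdim
  have hkey : ∀ z : E3, (‖z‖ + σ) ^ (-p) = σ ^ (-p) * (1 + ‖σ⁻¹ • z‖) ^ (-p) := by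
    intro z
    have h1 : ‖σ⁻¹ • z‖ = σ⁻¹ * ‖z‖ := by
      rw [norm_smul, Real.norm_eq_abs, abs_of_pos (inv_pos.2 hσ)]
    have h2 : 1 + σ⁻¹ * ‖z‖ = σ⁻¹ * (σ + ‖z‖) := by field_simp
    rw [h1, h2, Real.mul_rpow (le_of_lt (inv_pos.2 hσ)) (by positivity),
      Real.inv_rpow hσ.le,
      mul_inv_cancel_left₀ (ne_of_gt (Real.rpow_pos_of_pos hσ _)), add_comm]
  -- integrability of scaled function
  have hf : Integrable (fun z : E3 => (‖z‖ + σ) ^ (-p)) := by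
    simp_rw [hkey]
    apply Integrable.const_mul
    exact (integrable_comp_smul_iff volume (fun w : E3 => (1 + ‖w‖) ^ (-p))
      (inv_ne_zero hσ.ne')).2 hg
  rw [← ofReal_integral_eq_lintegral_ofReal hf
      (ae_of_all _ fun z => Real.rpow_nonneg (by positivity) _)]
  congr 1
  calc ∫ z : E3, (‖z‖ + σ) ^ (-p)
      = ∫ z : E3, σ ^ (-p) * (1 + ‖σ⁻¹ • z‖) ^ (-p) := by simp_rw [hkey]
    _ = σ ^ (-p) * ∫ z : E3, (1 + ‖σ⁻¹ • z‖) ^ (-p) := integral_const_mul _ _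
    _ = σ ^ (-p) * (|σ ^ Module.finrank ℝ E3| • ∫ w : E3, (1 + ‖w‖) ^ (-p)) := by
        rw [Measure.integral_comp_inv_smul volume (fun w : E3 => (1 + ‖w‖) ^ (-p)) σ]
    _ = σ ^ (3 - p) * ∫ w : E3, (1 + ‖w‖) ^ (-p) := by
        rw [finrankE3, smul_eq_mul, abs_of_pos (by positivity), ← mul_assoc]
        congr 1
        rw [← Real.rpow_natCast σ 3, ← Real.rpow_add hσ]
        ring_nf

lemma kerIntShift (p σ : ℝ) (hp : 3 < p) (hσ : 0 < σ) (x : E3) :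
    ∫⁻ y : E3, ENNReal.ofReal ((‖x - y‖ + σ) ^ (-p)) = ENNReal.ofReal (σ ^ (3 - p) * Cp p) := by
  rw [lint_shift x (fun z => ENNReal.ofReal ((‖z‖ + σ) ^ (-p))), kerInt p σ hp hσ]

-- pointwise product lemma
lemma prod_pow_eq (u v : ℝ) :
    ((‖u‖₊ : ℝ≥0∞) * (‖v‖₊ : ℝ≥0∞)) ^ ((3:ℝ)/2)
      = ((‖Real.sqrt |u| * Real.sqrt |v|‖₊ : ℝ≥0∞)) ^ (3:ℝ) := by
  rw [← enorm_eq_nnnorm, Real.enorm_eq_ofReal_abs, ← enorm_eq_nnnorm, Real.enorm_eq_ofReal_abs,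
    ← enorm_eq_nnnorm, Real.enorm_eq_ofReal_abs]
  rw [← ENNReal.ofReal_mul (abs_nonneg _), ENNReal.ofReal_rpow_of_nonneg (by positivity) (by norm_num),
    ENNReal.ofReal_rpow_of_nonneg (by positivity) (by norm_num)]
  congr 1
  have h1 : abs (Real.sqrt |u| * Real.sqrt |v|) = Real.sqrt (|u| * |v|) := by
    rw [abs_of_nonneg (by positivity), ← Real.sqrt_mul (abs_nonneg _)]
  rw [h1, Real.sqrt_eq_rpow, ← Real.rpow_mul (by positivity)]
  norm_num

lemma ker_meas (σ : ℝ) (hσ : 0 < σ) (x : E3) (q : ℝ) :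
    Measurable (fun y : E3 => ENNReal.ofReal ((‖x - y‖ + σ) ^ q)) := by
  apply ENNReal.measurable_ofReal.comp
  exact (((continuous_const.sub continuous_id).norm.add continuous_const).rpow_const
    (fun y => Or.inl (ne_of_gt (add_pos_of_nonneg_of_pos (norm_nonneg _) hσ)))).measurable

lemma sliceNearFar (σ ρ : ℝ) (hσ : 0 < σ) (hρ : 0 < ρ) (x : E3) (u v : E3 → ℝ)
    (hu : Measurable u) (hv : Measurable v) :
    ∫⁻ y, ENNReal.ofReal ((‖x - y‖ + σ) ^ (-(4:ℝ))) * ((‖u y‖₊ : ℝ≥0∞) * (‖v y‖₊ : ℝ≥0∞)) ≤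
      ENNReal.ofReal (σ ^ (-(3:ℝ)) * (Cp 12) ^ ((1:ℝ)/3)) *
        (locLp 3 ρ (fun y => Real.sqrt |u y| * Real.sqrt |v y|)) ^ 2
      + ENNReal.ofReal (σ ^ (-(1:ℝ)) * ρ ^ (-(2:ℝ)) * (Cp 6) ^ ((1:ℝ)/3)) *
        (eLpNorm (fun y => Real.sqrt |u y| * Real.sqrt |v y|) 3 volume) ^ 2 := by
  set f : E3 → ℝ := fun y => Real.sqrt |u y| * Real.sqrt |v y| with hf
  set ker : E3 → ℝ≥0∞ := fun y => ENNReal.ofReal ((‖x - y‖ + σ) ^ (-(4:ℝ))) with hkerdef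
  set g : E3 → ℝ≥0∞ := fun y => (‖u y‖₊ : ℝ≥0∞) * (‖v y‖₊ : ℝ≥0∞) with hgdef
  have hker : Measurable ker := ker_meas σ hσ x _
  have hg : Measurable g := hu.nnnorm.coe_nnreal_ennreal.mul hv.nnnorm.coe_nnreal_ennreal
  have hf_meas : Measurable f := (hu.abs.sqrt).mul (hv.abs.sqrt)
  have hpq : Real.HolderConjugate 3 (3/2) := by constructor <;> norm_num
  have hg32 : ∀ y, g y ^ ((3:ℝ)/2) = ((‖f y‖₊ : ℝ≥0∞)) ^ (3:ℝ) := fun y => prod_pow_eq (u y) (v y)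
  have ex23 : ∀ X : ℝ≥0∞, X ^ ((1:ℝ)/(3/2)) = (X ^ ((1:ℝ)/3)) ^ 2 := by
    intro X
    rw [← ENNReal.rpow_natCast (X ^ ((1:ℝ)/3)) 2, ← ENNReal.rpow_mul]
    norm_num
  -- kernel cube
  have hker3 : ∀ y, ker y ^ (3:ℝ) = ENNReal.ofReal ((‖x - y‖ + σ) ^ (-(12:ℝ))) := by
    intro y
    rw [hkerdef]
    rw [ENNReal.ofReal_rpow_of_nonneg (Real.rpow_nonneg (by positivity) _) (by norm_num),
      ← Real.rpow_mul (by positivity)]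
    norm_num
  -- near piece
  have hnear : ∫⁻ y in Metric.ball x ρ, ker y * g y ≤
      ENNReal.ofReal (σ ^ (-(3:ℝ)) * (Cp 12) ^ ((1:ℝ)/3)) * (locLp 3 ρ f) ^ 2 := by
    have hH := ENNReal.lintegral_mul_le_Lp_mul_Lq (volume.restrict (Metric.ball x ρ)) hpq
      hker.aemeasurable hg.aemeasurable
    refine le_trans hH ?_
    have h1 : (∫⁻ y in Metric.ball x ρ, ker y ^ (3:ℝ)) ^ ((1:ℝ)/3) ≤
        ENNReal.ofReal (σ ^ (-(3:ℝ)) * (Cp 12) ^ ((1:ℝ)/3)) := by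
      have : ∫⁻ y in Metric.ball x ρ, ker y ^ (3:ℝ) ≤ ENNReal.ofReal (σ ^ (3-(12:ℝ)) * Cp 12) := by
        calc ∫⁻ y in Metric.ball x ρ, ker y ^ (3:ℝ) ≤ ∫⁻ y, ker y ^ (3:ℝ) :=
              setLIntegral_le_lintegral _ _
          _ = ENNReal.ofReal (σ ^ (3-(12:ℝ)) * Cp 12) := by
              simp_rw [hker3]; exact kerIntShift 12 σ (by norm_num) hσ x
      refine le_trans (ENNReal.rpow_le_rpow this (by norm_num)) ?_
      rw [ENNReal.ofReal_rpow_of_nonneg (mul_nonneg (Real.rpow_nonneg hσ.le _) (Cp_nonneg _)) (by norm_num),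
        Real.mul_rpow (Real.rpow_nonneg hσ.le _) (Cp_nonneg _), ← Real.rpow_mul hσ.le]
      norm_num
    have h2 : (∫⁻ y in Metric.ball x ρ, g y ^ ((3:ℝ)/2)) ^ ((1:ℝ)/(3/2)) ≤ (locLp 3 ρ f) ^ 2 := by
      rw [ex23]
      refine pow_le_pow_left₀ zero_le ?_ 2
      simp_rw [hg32]
      exact le_iSup (fun x' : E3 => (∫⁻ y in Metric.ball x' ρ, ((‖f y‖₊ : ℝ≥0∞)) ^ (3:ℝ)) ^ ((1:ℝ)/3)) x
    exact mul_le_mul' h1 h2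
  -- far piece
  have hfar : ∫⁻ y in (Metric.ball x ρ)ᶜ, ker y * g y ≤
      ENNReal.ofReal (σ ^ (-(1:ℝ)) * ρ ^ (-(2:ℝ)) * (Cp 6) ^ ((1:ℝ)/3)) *
        (eLpNorm f 3 volume) ^ 2 := by
    have hH := ENNReal.lintegral_mul_le_Lp_mul_Lq (volume.restrict (Metric.ball x ρ)ᶜ) hpq
      hker.aemeasurable hg.aemeasurable
    refine le_trans hH (mul_le_mul' ?_ ?_)
    · -- kernel part
      have hptw : ∀ y ∈ (Metric.ball x ρ)ᶜ, ker y ^ (3:ℝ) ≤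
          ENNReal.ofReal (ρ ^ (-(6:ℝ))) * ENNReal.ofReal ((‖x - y‖ + σ) ^ (-(6:ℝ))) := by
        intro y hy
        have hd : ρ ≤ ‖x - y‖ := by
          simp only [mem_compl_iff, Metric.mem_ball, not_lt, dist_eq_norm] at hy
          rwa [norm_sub_rev]
        have hbase : (0:ℝ) < ‖x - y‖ + σ := by positivity
        rw [hker3 y, ← ENNReal.ofReal_mul (Real.rpow_nonneg hρ.le _)]
        apply ENNReal.ofReal_le_ofReal
        have h12 : (‖x - y‖ + σ) ^ (-(12:ℝ)) =
            (‖x - y‖ + σ) ^ (-(6:ℝ)) * (‖x - y‖ + σ) ^ (-(6:ℝ)) := by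
          rw [← Real.rpow_add hbase]; norm_num
        rw [h12]
        apply mul_le_mul_of_nonneg_right _ (Real.rpow_nonneg hbase.le _)
        exact Real.rpow_le_rpow_of_nonpos hρ
          (le_trans hd (le_add_of_nonneg_right hσ.le)) (by norm_num)
      calc (∫⁻ y in (Metric.ball x ρ)ᶜ, ker y ^ (3:ℝ)) ^ ((1:ℝ)/3)
          ≤ (∫⁻ y in (Metric.ball x ρ)ᶜ,
              ENNReal.ofReal (ρ ^ (-(6:ℝ))) * ENNReal.ofReal ((‖x - y‖ + σ) ^ (-(6:ℝ)))) ^ ((1:ℝ)/3) :=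
            ENNReal.rpow_le_rpow (setLIntegral_mono' measurableSet_ball.compl hptw) (by norm_num)
        _ ≤ (ENNReal.ofReal (ρ ^ (-(6:ℝ))) * ∫⁻ y, ENNReal.ofReal ((‖x - y‖ + σ) ^ (-(6:ℝ)))) ^ ((1:ℝ)/3) := by
            rw [lintegral_const_mul' _ _ ENNReal.ofReal_ne_top]
            exact ENNReal.rpow_le_rpow
              (mul_le_mul_right (setLIntegral_le_lintegral _ _) _) (by norm_num)
        _ = (ENNReal.ofReal (ρ ^ (-(6:ℝ))) * ENNReal.ofReal (σ ^ (3-(6:ℝ)) * Cp 6)) ^ ((1:ℝ)/3) := by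
            rw [kerIntShift 6 σ (by norm_num) hσ x]
        _ = ENNReal.ofReal (σ ^ (-(1:ℝ)) * ρ ^ (-(2:ℝ)) * (Cp 6) ^ ((1:ℝ)/3)) := by
            rw [← ENNReal.ofReal_mul (Real.rpow_nonneg hρ.le _),
              ENNReal.ofReal_rpow_of_nonneg
                (mul_nonneg (Real.rpow_nonneg hρ.le _)
                  (mul_nonneg (Real.rpow_nonneg hσ.le _) (Cp_nonneg _))) (by norm_num)]
            congr 1
            rw [Real.mul_rpow (Real.rpow_nonneg hρ.le _)
                (mul_nonneg (Real.rpow_nonneg hσ.le _) (Cp_nonneg _)),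
              Real.mul_rpow (Real.rpow_nonneg hσ.le _) (Cp_nonneg _),
              ← Real.rpow_mul hρ.le, ← Real.rpow_mul hσ.le]
            norm_num
            ring
    · -- g part
      rw [ex23]
      refine pow_le_pow_left₀ zero_le ?_ 2
      simp_rw [hg32]
      rw [eLpNorm_eq_lintegral_rpow_enorm_toReal (by norm_num) (by norm_num)]
      have h3 : ((3:ℝ≥0∞)).toReal = (3:ℝ) := by norm_num
      rw [h3]
      exact ENNReal.rpow_le_rpow (setLIntegral_le_lintegral _ _) (by norm_num)
  calc ∫⁻ y, ker y * g y
      = (∫⁻ y in Metric.ball x ρ, ker y * g y) + ∫⁻ y in (Metric.ball x ρ)ᶜ, ker y * g y :=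
        (lintegral_add_compl _ measurableSet_ball).symm
    _ ≤ _ := add_le_add hnear hfar

lemma sliceSup (σ : ℝ) (hσ : 0 < σ) (x : E3) (u v : E3 → ℝ) :
    ∫⁻ y, ENNReal.ofReal ((‖x - y‖ + σ) ^ (-(4:ℝ))) * ((‖u y‖₊ : ℝ≥0∞) * (‖v y‖₊ : ℝ≥0∞)) ≤
      ENNReal.ofReal (σ ^ (3-(4:ℝ)) * Cp 4) * eLpNorm (fun y => u y * v y) ⊤ volume := by
  have hae : ∀ᵐ y : E3, ((‖u y‖₊ : ℝ≥0∞) * (‖v y‖₊ : ℝ≥0∞)) ≤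
      eLpNorm (fun y => u y * v y) ⊤ volume := by
    have := ae_le_eLpNormEssSup (f := fun y : E3 => u y * v y) (μ := volume)
    filter_upwards [this] with y hy
    rw [eLpNorm_exponent_top]
    calc ((‖u y‖₊ : ℝ≥0∞) * (‖v y‖₊ : ℝ≥0∞)) = (‖u y * v y‖₊ : ℝ≥0∞) := by
          rw [nnnorm_mul]; simp [ENNReal.coe_mul]
      _ ≤ _ := by exact_mod_cast hy
  calc ∫⁻ y, ENNReal.ofReal ((‖x - y‖ + σ) ^ (-(4:ℝ))) * ((‖u y‖₊ : ℝ≥0∞) * (‖v y‖₊ : ℝ≥0∞))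
      ≤ ∫⁻ y, ENNReal.ofReal ((‖x - y‖ + σ) ^ (-(4:ℝ))) * eLpNorm (fun y => u y * v y) ⊤ volume := by
        apply lintegral_mono_ae
        filter_upwards [hae] with y hy
        exact mul_le_mul_right hy _
    _ = (∫⁻ y, ENNReal.ofReal ((‖x - y‖ + σ) ^ (-(4:ℝ)))) * eLpNorm (fun y => u y * v y) ⊤ volume :=
        lintegral_mul_const _ (ker_meas σ hσ x _)
    _ = _ := by rw [kerIntShift 4 σ (by norm_num) hσ x]

lemma timeInt (t : ℝ) (ht : 0 < t) :
    ∫⁻ τ in Set.Ioo (t/2) t, ENNReal.ofReal ((t - τ) ^ (-(1:ℝ)/2)) ≤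
      ENNReal.ofReal (2 * Real.sqrt t) := by
  have hint : IntervalIntegrable (fun τ => (t - τ) ^ (-(1:ℝ)/2)) volume (t/2) t := by
    have h0 : IntervalIntegrable (fun s : ℝ => s ^ (-(1:ℝ)/2)) volume (t - t/2) (t - t) := by
      apply intervalIntegral.intervalIntegrable_rpow'
      norm_num
    have := h0.comp_sub_left t
    simpa using this
  have hIoc : ∫⁻ τ in Set.Ioo (t/2) t, ENNReal.ofReal ((t - τ) ^ (-(1:ℝ)/2)) ≤
      ∫⁻ τ in Set.Ioc (t/2) t, ENNReal.ofReal ((t - τ) ^ (-(1:ℝ)/2)) :=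
    lintegral_mono_set Set.Ioo_subset_Ioc_self
  refine le_trans hIoc ?_
  have hig : IntegrableOn (fun τ => (t - τ) ^ (-(1:ℝ)/2)) (Set.Ioc (t/2) t) volume := by
    exact (intervalIntegrable_iff_integrableOn_Ioc_of_le (by linarith : t/2 ≤ t)).1 hint
  rw [← ofReal_integral_eq_lintegral_ofReal hig ?nonneg]
  case nonneg =>
    rw [EventuallyLE, ae_restrict_iff' measurableSet_Ioc]
    filter_upwards with τ hτ
    have : (0:ℝ) ≤ t - τ := by linarith [hτ.2]
    exact Real.rpow_nonneg this _
  apply ENNReal.ofReal_le_ofReal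
  have heq : ∫ τ in Set.Ioc (t/2) t, (t - τ) ^ (-(1:ℝ)/2) =
      ∫ τ in (t/2)..t, (t - τ) ^ (-(1:ℝ)/2) := by
    rw [intervalIntegral.integral_of_le (by linarith)]
  rw [heq, intervalIntegral.integral_comp_sub_left (fun s => s ^ (-(1:ℝ)/2)) t]
  have : t - t = 0 := by ring
  rw [this]
  rw [integral_rpow (Or.inl (by norm_num))]
  have h1 : (-(1:ℝ)/2 + 1) = 1/2 := by norm_num
  rw [h1]
  have h2 : (0:ℝ) ^ ((1:ℝ)/2) = 0 := by
    rw [Real.zero_rpow]; norm_num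
  rw [h2]
  have h3 : (t - t/2) = t/2 := by ring
  rw [h3]
  have h4 : (t/2) ^ ((1:ℝ)/2) ≤ Real.sqrt t := by
    rw [← Real.sqrt_eq_rpow]
    exact Real.sqrt_le_sqrt (by linarith)
  calc ((t/2) ^ ((1:ℝ)/2) - 0) / (1/2) = 2 * (t/2) ^ ((1:ℝ)/2) := by ring
    _ ≤ 2 * Real.sqrt t := by linarith


/-- Sup-norm estimate, with localized `L³` data on the right-hand side, for the
space-time convolution against a kernel with the Oseen-gradient decay. -/
theorem kerConv_sup_bound (K : ℝ → E3 → ℝ)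
    (hK : ∀ s : ℝ, 0 < s → ∀ z : E3, |K s z| ≤ (‖z‖ + Real.sqrt s) ^ (-(4 : ℝ)))
    (T : ℝ) (hT : 0 < T) :
    ∃ c : ℝ, 0 < c ∧
      ∀ a b : ℝ → E3 → ℝ,
        Measurable (Function.uncurry a) → Measurable (Function.uncurry b) →
        (⨆ t ∈ Set.Ioo (0 : ℝ) T, ENNReal.ofReal (Real.sqrt t) *
            (eLpNorm (a t) ⊤ volume + eLpNorm (b t) ⊤ volume)) < ⊤ →
        (⨆ t ∈ Set.Ioo (0 : ℝ) T,
            (eLpNorm (a t) 3 volume + eLpNorm (b t) 3 volume)) < ⊤ →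
        ∀ ρ : ℝ, 0 < ρ → ∀ t ∈ Set.Ioo (0 : ℝ) T,
          ENNReal.ofReal (Real.sqrt t) * eLpNorm (kerConv K a b t) ⊤ volume ≤
            ENNReal.ofReal c *
              ((⨆ τ ∈ Set.Ioo (0 : ℝ) t, ENNReal.ofReal τ *
                  eLpNorm (fun y => a τ y * b τ y) ⊤ volume) +
                (⨆ τ ∈ Set.Ioo (0 : ℝ) t,
                  (locLp 3 ρ fun y => Real.sqrt |a τ y| * Real.sqrt |b τ y|) ^ 2) +
                ENNReal.ofReal (t / ρ ^ 2) *
                  ⨆ τ ∈ Set.Ioo (0 : ℝ) t,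
                    (eLpNorm (fun y => Real.sqrt |a τ y| * Real.sqrt |b τ y|)
                      3 volume) ^ 2) := by
  refine ⟨4 * Cp 4 + Real.sqrt 2 * (Cp 12) ^ ((1:ℝ)/3) + (Cp 6) ^ ((1:ℝ)/3) + 1, ?_, ?_⟩
  · have h4 := Cp_nonneg 4
    have h12 : (0:ℝ) ≤ (Cp 12) ^ ((1:ℝ)/3) := Real.rpow_nonneg (Cp_nonneg 12) _
    have h6 : (0:ℝ) ≤ (Cp 6) ^ ((1:ℝ)/3) := Real.rpow_nonneg (Cp_nonneg 6) _
    nlinarith [Real.sqrt_nonneg 2]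
  intro a b ha hb _ _ ρ hρ t ht
  obtain ⟨ht0, htT⟩ := ht
  set c : ℝ := 4 * Cp 4 + Real.sqrt 2 * (Cp 12) ^ ((1:ℝ)/3) + (Cp 6) ^ ((1:ℝ)/3) + 1 with hc
  set A := ⨆ τ ∈ Set.Ioo (0 : ℝ) t, ENNReal.ofReal τ *
      eLpNorm (fun y => a τ y * b τ y) ⊤ volume with hA
  set B := ⨆ τ ∈ Set.Ioo (0 : ℝ) t,
      (locLp 3 ρ fun y => Real.sqrt |a τ y| * Real.sqrt |b τ y|) ^ 2 with hB
  set C := ⨆ τ ∈ Set.Ioo (0 : ℝ) t,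
      (eLpNorm (fun y => Real.sqrt |a τ y| * Real.sqrt |b τ y|) 3 volume) ^ 2 with hC
  have hhalf : (0:ℝ) < t/2 := by linarith
  set σ0 : ℝ := Real.sqrt (t/2) with hσ0def
  have hσ0 : 0 < σ0 := Real.sqrt_pos.2 hhalf
  set M : ℝ≥0∞ :=
    ENNReal.ofReal (t/2) *
      (ENNReal.ofReal (σ0 ^ (-(3:ℝ)) * (Cp 12) ^ ((1:ℝ)/3)) * B +
        ENNReal.ofReal (σ0 ^ (-(1:ℝ)) * ρ ^ (-(2:ℝ)) * (Cp 6) ^ ((1:ℝ)/3)) * C) +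
      ENNReal.ofReal (2 * Real.sqrt t) *
        (ENNReal.ofReal (Cp 4) * ((ENNReal.ofReal (t/2))⁻¹ * A)) with hM
  -- pointwise bound
  have key : ∀ x : E3, (‖kerConv K a b t x‖₊ : ℝ≥0∞) ≤ M := by
    intro x
    have hinner : ∀ τ ∈ Set.Ioo (0:ℝ) t,
        (‖∫ y, K (t - τ) (x - y) * (a τ y * b τ y)‖₊ : ℝ≥0∞) ≤
          ∫⁻ y, ENNReal.ofReal ((‖x - y‖ + Real.sqrt (t - τ)) ^ (-(4:ℝ))) *
            ((‖a τ y‖₊ : ℝ≥0∞) * (‖b τ y‖₊ : ℝ≥0∞)) := by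
      intro τ hτ
      refine le_trans (enorm_integral_le_lintegral_enorm _) (lintegral_mono fun y => ?_)
      rw [Real.enorm_eq_ofReal_abs, ← enorm_eq_nnnorm, Real.enorm_eq_ofReal_abs,
        ← enorm_eq_nnnorm, Real.enorm_eq_ofReal_abs,
        abs_mul, abs_mul, ENNReal.ofReal_mul (abs_nonneg _), ENNReal.ofReal_mul (abs_nonneg _)]
      refine mul_le_mul' (ENNReal.ofReal_le_ofReal ?_) le_rfl
      exact hK (t - τ) (by linarith [hτ.2]) (x - y)
    have h0 : (‖kerConv K a b t x‖₊ : ℝ≥0∞) ≤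
        ∫⁻ τ in Set.Ioo (0:ℝ) t, (‖∫ y, K (t - τ) (x - y) * (a τ y * b τ y)‖₊ : ℝ≥0∞) := by
      rw [kerConv]
      exact enorm_integral_le_lintegral_enorm _
    have hsub : Set.Ioo (0:ℝ) t ⊆ Set.Ioc (0:ℝ) (t/2) ∪ Set.Ioo (t/2) t := by
      intro τ hτ
      rcases le_or_gt τ (t/2) with h | h
      · exact Or.inl ⟨hτ.1, h⟩
      · exact Or.inr ⟨h, hτ.2⟩
    have hsplit : (‖kerConv K a b t x‖₊ : ℝ≥0∞) ≤
        (∫⁻ τ in Set.Ioc (0:ℝ) (t/2),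
            (‖∫ y, K (t - τ) (x - y) * (a τ y * b τ y)‖₊ : ℝ≥0∞)) +
          ∫⁻ τ in Set.Ioo (t/2) t,
            (‖∫ y, K (t - τ) (x - y) * (a τ y * b τ y)‖₊ : ℝ≥0∞) :=
      le_trans h0 (le_trans (lintegral_mono_set hsub) (lintegral_union_le _ _ _))
    refine le_trans hsplit ?_
    rw [hM]
    refine add_le_add ?_ ?_
    · -- early piece
      refine le_trans (setLIntegral_mono'
        (g := fun _ : ℝ => ENNReal.ofReal (σ0 ^ (-(3:ℝ)) * (Cp 12) ^ ((1:ℝ)/3)) * B +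
          ENNReal.ofReal (σ0 ^ (-(1:ℝ)) * ρ ^ (-(2:ℝ)) * (Cp 6) ^ ((1:ℝ)/3)) * C)
        measurableSet_Ioc (fun τ hτ => ?_)) ?_
      · -- pointwise bound by a constant
        have hτ0 : 0 < τ := hτ.1
        have hτt : τ < t := lt_of_le_of_lt hτ.2 (by linarith)
        have hs : 0 < t - τ := by linarith
        have hσ : σ0 ≤ Real.sqrt (t - τ) := Real.sqrt_le_sqrt (by linarith [hτ.2])
        have hσs : 0 < Real.sqrt (t - τ) := Real.sqrt_pos.2 hs
        refine le_trans (hinner τ ⟨hτ0, hτt⟩) ?_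
        refine le_trans (sliceNearFar (Real.sqrt (t - τ)) ρ hσs hρ x (a τ) (b τ)
          ha.of_uncurry_left hb.of_uncurry_left) ?_
        refine add_le_add (mul_le_mul' (ENNReal.ofReal_le_ofReal ?_) ?_)
          (mul_le_mul' (ENNReal.ofReal_le_ofReal ?_) ?_)
        · exact mul_le_mul_of_nonneg_right
            (Real.rpow_le_rpow_of_nonpos hσ0 hσ (by norm_num))
            (Real.rpow_nonneg (Cp_nonneg 12) _)
        · rw [hB]
          exact le_biSup
            (fun τ : ℝ => (locLp 3 ρ fun y => Real.sqrt |a τ y| * Real.sqrt |b τ y|) ^ 2)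
            (Set.mem_Ioo.mpr ⟨hτ0, hτt⟩)
        · refine mul_le_mul_of_nonneg_right (mul_le_mul_of_nonneg_right
            (Real.rpow_le_rpow_of_nonpos hσ0 hσ (by norm_num))
            (Real.rpow_nonneg hρ.le _)) (Real.rpow_nonneg (Cp_nonneg 6) _)
        · rw [hC]
          exact le_biSup
            (fun τ : ℝ => eLpNorm (fun y => Real.sqrt |a τ y| * Real.sqrt |b τ y|) 3 volume ^ 2)
            (Set.mem_Ioo.mpr ⟨hτ0, hτt⟩)
      · rw [setLIntegral_const, Real.volume_Ioc]
        have : t/2 - 0 = t/2 := by ring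
        rw [this, mul_comm]
    · -- late piece
      refine le_trans (setLIntegral_mono'
        (g := fun τ : ℝ => ENNReal.ofReal ((t - τ) ^ (-(1:ℝ)/2)) *
          (ENNReal.ofReal (Cp 4) * ((ENNReal.ofReal (t/2))⁻¹ * A)))
        measurableSet_Ioo (fun τ hτ => ?_)) ?_
      · show (‖∫ y, K (t - τ) (x - y) * (a τ y * b τ y)‖₊ : ℝ≥0∞) ≤
          (fun τ => ENNReal.ofReal ((t - τ) ^ (-(1:ℝ)/2)) *
            (ENNReal.ofReal (Cp 4) * ((ENNReal.ofReal (t/2))⁻¹ * A))) τ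
        have hτ2 : t/2 < τ := hτ.1
        have hτt : τ < t := hτ.2
        have hτ0 : 0 < τ := by linarith
        have hs : 0 < t - τ := by linarith
        have hσs : 0 < Real.sqrt (t - τ) := Real.sqrt_pos.2 hs
        refine le_trans (hinner τ ⟨hτ0, hτt⟩) ?_
        refine le_trans (sliceSup (Real.sqrt (t - τ)) hσs x (a τ) (b τ)) ?_
        have hrw : Real.sqrt (t - τ) ^ (3-(4:ℝ)) = (t - τ) ^ (-(1:ℝ)/2) := by
          rw [Real.sqrt_eq_rpow, ← Real.rpow_mul hs.le]
          norm_num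
        rw [hrw, ENNReal.ofReal_mul (Real.rpow_nonneg hs.le _), mul_assoc]
        refine mul_le_mul' le_rfl (mul_le_mul' le_rfl ?_)
        have h1 : ENNReal.ofReal τ * eLpNorm (fun y => a τ y * b τ y) ⊤ volume ≤ A := by
          rw [hA]
          exact le_biSup
            (fun τ : ℝ => ENNReal.ofReal τ * eLpNorm (fun y => a τ y * b τ y) ⊤ volume)
            (Set.mem_Ioo.mpr ⟨hτ0, hτt⟩)
        have hτne : (ENNReal.ofReal τ) ≠ 0 := by
          simp only [ne_eq, ENNReal.ofReal_eq_zero, not_le]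
          linarith
        have h2 : eLpNorm (fun y => a τ y * b τ y) ⊤ volume ≤ (ENNReal.ofReal τ)⁻¹ * A := by
          calc eLpNorm (fun y => a τ y * b τ y) ⊤ volume
              = (ENNReal.ofReal τ)⁻¹ *
                (ENNReal.ofReal τ * eLpNorm (fun y => a τ y * b τ y) ⊤ volume) := by
                rw [← mul_assoc, ENNReal.inv_mul_cancel hτne ENNReal.ofReal_ne_top, one_mul]
            _ ≤ (ENNReal.ofReal τ)⁻¹ * A := mul_le_mul_right h1 _
        refine le_trans h2 (mul_le_mul' ?_ le_rfl)
        exact ENNReal.inv_le_inv' (ENNReal.ofReal_le_ofReal hτ2.le)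
      · have hmeas : Measurable (fun τ : ℝ => ENNReal.ofReal ((t - τ) ^ (-(1:ℝ)/2))) :=
          ENNReal.measurable_ofReal.comp
            ((measurable_const.sub measurable_id).pow measurable_const)
        rw [lintegral_mul_const'' _ hmeas.aemeasurable]
        exact mul_le_mul' (timeInt t ht0) le_rfl
  -- from pointwise to essSup
  have hsup : eLpNorm (kerConv K a b t) ⊤ volume ≤ M := by
    rw [eLpNorm_exponent_top, eLpNormEssSup]
    exact essSup_le_of_ae_le _ (ae_of_all _ key)
  refine le_trans (mul_le_mul_right hsup _) ?_
  -- final computation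
  rw [hM]
  have hsqt0 : (0:ℝ) ≤ Real.sqrt t := Real.sqrt_nonneg t
  have hD12 : (0:ℝ) ≤ (Cp 12) ^ ((1:ℝ)/3) := Real.rpow_nonneg (Cp_nonneg 12) _
  have hD6 : (0:ℝ) ≤ (Cp 6) ^ ((1:ℝ)/3) := Real.rpow_nonneg (Cp_nonneg 6) _
  have hD2 : (0:ℝ) ≤ Real.sqrt 2 * (Cp 12) ^ ((1:ℝ)/3) :=
    mul_nonneg (Real.sqrt_nonneg 2) hD12
  have hCp4 := Cp_nonneg 4
  -- real scalar identities
  have hbase3 : Real.sqrt t * (t/2) * σ0 ^ (-(3:ℝ)) = Real.sqrt 2 := by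
    have e1 : σ0 ^ (-(3:ℝ)) = (t/2) ^ (-(3:ℝ)/2) := by
      rw [hσ0def, Real.sqrt_eq_rpow, ← Real.rpow_mul hhalf.le]
      norm_num
    have e2 : (t/2) * (t/2) ^ (-(3:ℝ)/2) = (t/2) ^ (-(1:ℝ)/2) := by
      nth_rewrite 1 [← Real.rpow_one (t/2)]
      rw [← Real.rpow_add hhalf]
      norm_num
    have e3 : (t/2) ^ (-(1:ℝ)/2) = (Real.sqrt (t/2))⁻¹ := by
      rw [show (-(1:ℝ)/2) = -(1/2) by norm_num, Real.rpow_neg hhalf.le, Real.sqrt_eq_rpow]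
    have e4 : Real.sqrt t * (Real.sqrt (t/2))⁻¹ = Real.sqrt 2 := by
      rw [← div_eq_mul_inv, ← Real.sqrt_div ht0.le]
      congr 1
      field_simp
    calc Real.sqrt t * (t/2) * σ0 ^ (-(3:ℝ))
        = Real.sqrt t * ((t/2) * (t/2) ^ (-(3:ℝ)/2)) := by rw [e1]; ring
      _ = Real.sqrt t * (Real.sqrt (t/2))⁻¹ := by rw [e2, e3]
      _ = Real.sqrt 2 := e4
  have hbase1 : Real.sqrt t * (t/2) * σ0 ^ (-(1:ℝ)) = Real.sqrt t * σ0 := by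
    have hs2 : σ0 * σ0 = t/2 := Real.mul_self_sqrt hhalf.le
    have e5 : (t/2) * σ0⁻¹ = σ0 := by
      rw [← hs2]
      field_simp
    calc Real.sqrt t * (t/2) * σ0 ^ (-(1:ℝ))
        = Real.sqrt t * ((t/2) * σ0⁻¹) := by rw [Real.rpow_neg_one]; ring
      _ = Real.sqrt t * σ0 := by rw [e5]
  have hst : Real.sqrt t * σ0 ≤ t := by
    have h1 : σ0 ≤ Real.sqrt t := Real.sqrt_le_sqrt (by linarith)
    nlinarith [Real.mul_self_sqrt ht0.le]
  -- term B
  have htermB : ENNReal.ofReal (Real.sqrt t) *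
      (ENNReal.ofReal (t/2) * (ENNReal.ofReal (σ0 ^ (-(3:ℝ)) * (Cp 12) ^ ((1:ℝ)/3)) * B)) ≤
      ENNReal.ofReal c * B := by
    have hr : Real.sqrt t * (t/2) * (σ0 ^ (-(3:ℝ)) * (Cp 12) ^ ((1:ℝ)/3)) ≤ c := by
      have : Real.sqrt t * (t/2) * (σ0 ^ (-(3:ℝ)) * (Cp 12) ^ ((1:ℝ)/3)) =
          (Real.sqrt t * (t/2) * σ0 ^ (-(3:ℝ))) * (Cp 12) ^ ((1:ℝ)/3) := by ring
      rw [this, hbase3, hc]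
      linarith
    calc ENNReal.ofReal (Real.sqrt t) *
        (ENNReal.ofReal (t/2) * (ENNReal.ofReal (σ0 ^ (-(3:ℝ)) * (Cp 12) ^ ((1:ℝ)/3)) * B))
        = (ENNReal.ofReal (Real.sqrt t) * ENNReal.ofReal (t/2) *
            ENNReal.ofReal (σ0 ^ (-(3:ℝ)) * (Cp 12) ^ ((1:ℝ)/3))) * B := by ring
      _ = ENNReal.ofReal (Real.sqrt t * (t/2) * (σ0 ^ (-(3:ℝ)) * (Cp 12) ^ ((1:ℝ)/3))) * B := by
          rw [← ENNReal.ofReal_mul hsqt0, ← ENNReal.ofReal_mul (by positivity)]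
      _ ≤ ENNReal.ofReal c * B := mul_le_mul_left (ENNReal.ofReal_le_ofReal hr) B
  -- term C
  have htermC : ENNReal.ofReal (Real.sqrt t) *
      (ENNReal.ofReal (t/2) *
        (ENNReal.ofReal (σ0 ^ (-(1:ℝ)) * ρ ^ (-(2:ℝ)) * (Cp 6) ^ ((1:ℝ)/3)) * C)) ≤
      ENNReal.ofReal c * (ENNReal.ofReal (t / ρ ^ 2) * C) := by
    have hr : Real.sqrt t * (t/2) * (σ0 ^ (-(1:ℝ)) * ρ ^ (-(2:ℝ)) * (Cp 6) ^ ((1:ℝ)/3)) ≤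
        c * (t / ρ ^ 2) := by
      have hρ2 : ρ ^ (-(2:ℝ)) = (ρ ^ 2)⁻¹ := by
        rw [show (-(2:ℝ)) = -((2:ℕ):ℝ) by norm_num, Real.rpow_neg hρ.le, Real.rpow_natCast]
      have hEc : (Cp 6) ^ ((1:ℝ)/3) ≤ c := by rw [hc]; linarith
      calc Real.sqrt t * (t/2) * (σ0 ^ (-(1:ℝ)) * ρ ^ (-(2:ℝ)) * (Cp 6) ^ ((1:ℝ)/3))
          = (Real.sqrt t * (t/2) * σ0 ^ (-(1:ℝ))) * (ρ ^ (-(2:ℝ)) * (Cp 6) ^ ((1:ℝ)/3)) := by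
            ring
        _ = (Real.sqrt t * σ0) * ((ρ ^ 2)⁻¹ * (Cp 6) ^ ((1:ℝ)/3)) := by rw [hbase1, hρ2]
        _ ≤ t * ((ρ ^ 2)⁻¹ * (Cp 6) ^ ((1:ℝ)/3)) :=
            mul_le_mul_of_nonneg_right hst (mul_nonneg (by positivity) hD6)
        _ = (t / ρ ^ 2) * (Cp 6) ^ ((1:ℝ)/3) := by rw [div_eq_mul_inv]; ring
        _ ≤ (t / ρ ^ 2) * c := mul_le_mul_of_nonneg_left hEc (by positivity)
        _ = c * (t / ρ ^ 2) := mul_comm _ _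
    calc ENNReal.ofReal (Real.sqrt t) *
        (ENNReal.ofReal (t/2) *
          (ENNReal.ofReal (σ0 ^ (-(1:ℝ)) * ρ ^ (-(2:ℝ)) * (Cp 6) ^ ((1:ℝ)/3)) * C))
        = (ENNReal.ofReal (Real.sqrt t) * ENNReal.ofReal (t/2) *
            ENNReal.ofReal (σ0 ^ (-(1:ℝ)) * ρ ^ (-(2:ℝ)) * (Cp 6) ^ ((1:ℝ)/3))) * C := by ring
      _ = ENNReal.ofReal (Real.sqrt t * (t/2) *
            (σ0 ^ (-(1:ℝ)) * ρ ^ (-(2:ℝ)) * (Cp 6) ^ ((1:ℝ)/3))) * C := by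
          rw [← ENNReal.ofReal_mul hsqt0, ← ENNReal.ofReal_mul (by positivity)]
      _ ≤ ENNReal.ofReal (c * (t / ρ ^ 2)) * C :=
          mul_le_mul_left (ENNReal.ofReal_le_ofReal hr) C
      _ = ENNReal.ofReal c * (ENNReal.ofReal (t / ρ ^ 2) * C) := by
          rw [ENNReal.ofReal_mul (by rw [hc]; nlinarith), mul_assoc]
  -- term A
  have htermA : ENNReal.ofReal (Real.sqrt t) *
      (ENNReal.ofReal (2 * Real.sqrt t) *
        (ENNReal.ofReal (Cp 4) * ((ENNReal.ofReal (t/2))⁻¹ * A))) ≤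
      ENNReal.ofReal c * A := by
    have hinv : (ENNReal.ofReal (t/2))⁻¹ = ENNReal.ofReal ((t/2)⁻¹) := by
      rw [← ENNReal.ofReal_inv_of_pos hhalf]
    rw [hinv]
    have hr : Real.sqrt t * (2 * Real.sqrt t) * Cp 4 * (t/2)⁻¹ ≤ c := by
      have hsq : Real.sqrt t * Real.sqrt t = t := Real.mul_self_sqrt ht0.le
      have : Real.sqrt t * (2 * Real.sqrt t) * Cp 4 * (t/2)⁻¹ =
          (Real.sqrt t * Real.sqrt t) * (2 * Cp 4 * (t/2)⁻¹) := by ring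
      rw [this, hsq]
      have h4 : t * (2 * Cp 4 * (t/2)⁻¹) = 4 * Cp 4 := by
        field_simp
        ring
      rw [h4, hc]
      linarith
    calc ENNReal.ofReal (Real.sqrt t) *
        (ENNReal.ofReal (2 * Real.sqrt t) *
          (ENNReal.ofReal (Cp 4) * (ENNReal.ofReal ((t/2)⁻¹) * A)))
        = (ENNReal.ofReal (Real.sqrt t) * ENNReal.ofReal (2 * Real.sqrt t) *
            ENNReal.ofReal (Cp 4) * ENNReal.ofReal ((t/2)⁻¹)) * A := by ring
      _ = ENNReal.ofReal (Real.sqrt t * (2 * Real.sqrt t) * Cp 4 * (t/2)⁻¹) * A := by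
          rw [← ENNReal.ofReal_mul hsqt0, ← ENNReal.ofReal_mul (by positivity),
            ← ENNReal.ofReal_mul (by positivity)]
      _ ≤ ENNReal.ofReal c * A := mul_le_mul_left (ENNReal.ofReal_le_ofReal hr) A
  calc ENNReal.ofReal (Real.sqrt t) *
      (ENNReal.ofReal (t/2) *
        (ENNReal.ofReal (σ0 ^ (-(3:ℝ)) * (Cp 12) ^ ((1:ℝ)/3)) * B +
          ENNReal.ofReal (σ0 ^ (-(1:ℝ)) * ρ ^ (-(2:ℝ)) * (Cp 6) ^ ((1:ℝ)/3)) * C) +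
        ENNReal.ofReal (2 * Real.sqrt t) *
          (ENNReal.ofReal (Cp 4) * ((ENNReal.ofReal (t/2))⁻¹ * A)))
      = ENNReal.ofReal (Real.sqrt t) *
          (ENNReal.ofReal (t/2) * (ENNReal.ofReal (σ0 ^ (-(3:ℝ)) * (Cp 12) ^ ((1:ℝ)/3)) * B)) +
        ENNReal.ofReal (Real.sqrt t) *
          (ENNReal.ofReal (t/2) *
            (ENNReal.ofReal (σ0 ^ (-(1:ℝ)) * ρ ^ (-(2:ℝ)) * (Cp 6) ^ ((1:ℝ)/3)) * C)) +
        ENNReal.ofReal (Real.sqrt t) *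
          (ENNReal.ofReal (2 * Real.sqrt t) *
            (ENNReal.ofReal (Cp 4) * ((ENNReal.ofReal (t/2))⁻¹ * A))) := by ring
    _ ≤ ENNReal.ofReal c * B + ENNReal.ofReal c * (ENNReal.ofReal (t / ρ ^ 2) * C) +
          ENNReal.ofReal c * A := add_le_add (add_le_add htermB htermC) htermA
    _ = ENNReal.ofReal c * (A + B + ENNReal.ofReal (t / ρ ^ 2) * C) := by ring
end
end
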